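/- In the super Yangian Y_{m|n} over a field of characteristic p > 2, the odd Gaussian generators satisfy [e_m^{(r)}, e_m^{(s)}] = 0 for all r, s > 0; in particular (e_m^{(r)})^2 = 0 for all r > 0. -/

import Mathlib

noncomputable def inU {A : Type*} [Semiring A] (f : ℕ → A) : MvPowerSeries (Fin 2) A :=
  fun d => if d 1 = 0 then f (d 0) else 0

noncomputable def inV {A : Type*} [Semiring A] (f : ℕ → A) : MvPowerSeries (Fin 2) A :=
  fun d => if d 0 = 0 then f (d 1) else 0

noncomputable def cf2 {A : Type*} [Semiring A] (F : MvPowerSeries (Fin 2) A) (a b : ℕ) : A :=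
  MvPowerSeries.coeff (Finsupp.single 0 a + Finsupp.single 1 b) F

/-!
Write `S r s = e r * e s + e s * e r` and `C n = ∑_{i+j=n} e i * e j`. Comparing coefficients
of `u^a v^b`, the defining relation reads
`S (a+1) b - S a (b+1) = S a b - [b = 0] C a - [a = 0] C b`.
At `(a, 0)` and `(0, a)` it gives `S a 1 = C a` and `S 1 a = -C a`; since `S` is symmetric,
`2 C a = 0`, so `C = 0` because `2` is invertible. The relation then becomes the recursion
`S (a+1) b = S a b + S a (b+1)`, which propagates `S 0 b = 0` (from `e 0 = 0`) to all of `S`.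
-/

open Finset

theorem Finset.Nat.sum_antidiagonal_ite_fst_eq_zero {M : Type*} [AddCommMonoid M] (n : ℕ)
    (h : ℕ × ℕ → M) : ∑ p ∈ antidiagonal n, (if p.1 = 0 then h p else 0) = h (0, n) := by
  rw [sum_eq_single (0, n) (fun p hp hne => if_neg ?_) (by simp)]
  · simp
  · rintro h0
    exact hne (Prod.ext h0 (by simpa [h0] using hp))

theorem Finset.Nat.sum_antidiagonal_ite_snd_eq_zero {M : Type*} [AddCommMonoid M] (n : ℕ)
    (h : ℕ × ℕ → M) : ∑ p ∈ antidiagonal n, (if p.2 = 0 then h p else 0) = h (n, 0) := by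
  rw [← Nat.sum_antidiagonal_swap]
  exact sum_antidiagonal_ite_fst_eq_zero n (h ∘ Prod.swap)

theorem Finsupp.single_zero_add_single_one (x : Fin 2 →₀ ℕ) :
    single 0 (x 0) + single 1 (x 1) = x := by
  ext i
  fin_cases i <;> simp

section Coefficients

variable {A : Type*} [Semiring A]

theorem cf2_add (F G : MvPowerSeries (Fin 2) A) (a b : ℕ) :
    cf2 (F + G) a b = cf2 F a b + cf2 G a b :=
  map_add _ F G

theorem cf2_mul (F G : MvPowerSeries (Fin 2) A) (a b : ℕ) :
    cf2 (F * G) a b =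
      ∑ i ∈ antidiagonal a, ∑ j ∈ antidiagonal b, cf2 F i.1 j.1 * cf2 G i.2 j.2 := by
  rw [cf2, MvPowerSeries.coeff_mul, ← sum_product']
  symm
  refine sum_nbij' (fun x => (Finsupp.single 0 x.1.1 + Finsupp.single 1 x.2.1,
      Finsupp.single 0 x.1.2 + Finsupp.single 1 x.2.2))
    (fun y => ((y.1 0, y.2 0), (y.1 1, y.2 1))) ?_ ?_ ?_ ?_ (fun _ _ => rfl)
  · rintro ⟨⟨i, j⟩, ⟨k, l⟩⟩ h
    simp only [mem_product, HasAntidiagonal.mem_antidiagonal] at h ⊢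
    rw [← h.1, ← h.2]
    ext c
    fin_cases c <;> simp [add_comm]
  · rintro ⟨x, y⟩ h
    simp only [mem_product, HasAntidiagonal.mem_antidiagonal] at h ⊢
    exact ⟨by simpa using congr($h 0), by simpa using congr($h 1)⟩
  · rintro ⟨⟨i, j⟩, ⟨k, l⟩⟩ _
    simp
  · rintro ⟨x, y⟩ _
    simp [Finsupp.single_zero_add_single_one]

theorem cf2_inU (f : ℕ → A) (i k : ℕ) : cf2 (inU f) i k = if k = 0 then f i else 0 := by
  simp [cf2, inU, MvPowerSeries.coeff_apply]

theorem cf2_inV (f : ℕ → A) (i k : ℕ) : cf2 (inV f) i k = if i = 0 then f k else 0 := by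
  simp [cf2, inV, MvPowerSeries.coeff_apply]

theorem cf2_inU_mul_inV (f g : ℕ → A) (a b : ℕ) : cf2 (inU f * inV g) a b = f a * g b := by
  simp [cf2_mul, cf2_inU, cf2_inV, ite_mul, mul_ite, Nat.sum_antidiagonal_ite_fst_eq_zero,
    Nat.sum_antidiagonal_ite_snd_eq_zero]

theorem cf2_inV_mul_inU (f g : ℕ → A) (a b : ℕ) : cf2 (inV f * inU g) a b = f b * g a := by
  simp [cf2_mul, cf2_inU, cf2_inV, ite_mul, mul_ite, Nat.sum_antidiagonal_ite_fst_eq_zero,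
    Nat.sum_antidiagonal_ite_snd_eq_zero]

theorem cf2_inU_mul_inU (f g : ℕ → A) (a b : ℕ) :
    cf2 (inU f * inU g) a b = if b = 0 then ∑ i ∈ antidiagonal a, f i.1 * g i.2 else 0 := by
  simp [cf2_mul, cf2_inU, ite_mul, mul_ite, Nat.sum_antidiagonal_ite_snd_eq_zero]

theorem cf2_inV_mul_inV (f g : ℕ → A) (a b : ℕ) :
    cf2 (inV f * inV g) a b = if a = 0 then ∑ i ∈ antidiagonal b, f i.1 * g i.2 else 0 := by
  simp [cf2_mul, cf2_inV, ite_mul, mul_ite, Nat.sum_antidiagonal_ite_snd_eq_zero]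

end Coefficients

section RingCoefficients

variable {A : Type*} [Ring A]

theorem cf2_sub (F G : MvPowerSeries (Fin 2) A) (a b : ℕ) :
    cf2 (F - G) a b = cf2 F a b - cf2 G a b :=
  map_sub _ F G

theorem cf2_inU_sub_inV_mul_self (f : ℕ → A) (a b : ℕ) :
    cf2 ((inU f - inV f) * (inU f - inV f)) a b =
      (if b = 0 then ∑ i ∈ antidiagonal a, f i.1 * f i.2 else 0) - (f a * f b + f b * f a) +
        (if a = 0 then ∑ i ∈ antidiagonal b, f i.1 * f i.2 else 0) := by
  simp only [sub_mul, mul_sub, cf2_sub, cf2_inU_mul_inU, cf2_inU_mul_inV, cf2_inV_mul_inU,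
    cf2_inV_mul_inV]
  abel

end RingCoefficients

theorem eq_zero_of_shift_relation {M : Type*} [AddCommGroup M]
    (htwo : ∀ x : M, x + x = 0 → x = 0) {S : ℕ → ℕ → M} {C : ℕ → M}
    (hS0 : ∀ b, S 0 b = 0) (hS : ∀ a b, S a b = S b a) (hC0 : C 0 = 0)
    (hR : ∀ a b, S (a + 1) b - S a (b + 1) =
      S a b - (if b = 0 then C a else 0) - (if a = 0 then C b else 0)) (a b : ℕ) :
    S a b = 0 := by
  have hC : ∀ n, C n = 0 := by
    intro n
    have hn1 : S n 1 = C n := by simpa [hS _ 0, hS0, hC0] using hR n 0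
    have h1n : S 1 n = -C n := by simpa [hS0, hC0] using hR 0 n
    apply htwo
    calc C n + C n = S n 1 - S 1 n := by rw [hn1, h1n, sub_neg_eq_add]
      _ = 0 := by rw [hS, sub_self]
  have hrec : ∀ a b, S (a + 1) b = S a b + S a (b + 1) := by
    simpa [hC, sub_eq_iff_eq_add] using hR
  induction a generalizing b with
  | zero => exact hS0 b
  | succ a ih => rw [hrec, ih, ih, add_zero]

/-- in the super Yangian Y_{m|n} over a field of characteristic p > 2, the
odd Gaussian generators satisfy [e_m^{(r)}, e_m^{(s)}] = 0 (supercommutator of odd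
elements, i.e. e_m^{(r)} e_m^{(s)} + e_m^{(s)} e_m^{(r)} = 0) for all r,s > 0; in
particular (e_m^{(r)})² = 0 for all r > 0.  The hypothesis is the defining relation
(u−v)[e_m(u), e_m(v)] = −(e_m(u) − e_m(v))² (since |m+1| = 1), expressed
coefficientwise; the Yangian is a k-algebra over the base field k. -/
theorem odd_e_square_zero
    (k : Type*) [Field k] (p : ℕ) [CharP k p] (hp : 2 < p)
    (A : Type*) [Ring A] [Algebra k A]
    (e : ℕ → A) (he0 : e 0 = 0)
    (hrel : ∀ a b : ℕ,
      cf2 (inU e * inV e + inV e * inU e) (a+1) b -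
        cf2 (inU e * inV e + inV e * inU e) a (b+1) =
      - cf2 ((inU e - inV e) * (inU e - inV e)) a b) :
    (∀ r s : ℕ, 0 < r → 0 < s → e r * e s + e s * e r = 0) ∧
    (∀ r : ℕ, 0 < r → e r * e r = 0) := by
  have two_ne_zero : (2 : k) ≠ 0 := Ring.two_ne_zero (by rw [ringChar.eq k p]; omega)
  have htwo : ∀ x : A, x + x = 0 → x = 0 := fun x hx =>
    (smul_eq_zero.mp ((two_smul k x).trans hx)).resolve_left two_ne_zero
  have hcoeff : ∀ a b : ℕ,
      e (a + 1) * e b + e b * e (a + 1) - (e a * e (b + 1) + e (b + 1) * e a) =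
        e a * e b + e b * e a - (if b = 0 then ∑ i ∈ antidiagonal a, e i.1 * e i.2 else 0) -
          (if a = 0 then ∑ i ∈ antidiagonal b, e i.1 * e i.2 else 0) := fun a b => by
    have h := hrel a b
    rw [cf2_add, cf2_add, cf2_inU_mul_inV, cf2_inV_mul_inU, cf2_inU_mul_inV, cf2_inV_mul_inU,
      cf2_inU_sub_inV_mul_self] at h
    rw [h]
    abel
  have hanticomm : ∀ r s, e r * e s + e s * e r = 0 :=
    eq_zero_of_shift_relation htwo (by simp [he0]) (fun _ _ => add_comm _ _) (by simp [he0])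
      hcoeff
  exact ⟨fun r s _ _ => hanticomm r s, fun r _ => htwo _ (hanticomm r r)⟩
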